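/- arXiv:1707.06295 — 5 statements merged into one kernel-verified Lean document; each statement's English description precedes it below -/
import Mathlib

section
/- For real variables X_1, ..., X_p and integers 1 ≤ n ≤ m ≤ p, the sum over i from 1 to p of X_i · e_{n-1}^{ī}(X) · e_{m-1}^{ī}(X) equals the sum over k ≥ 1 of (m - n + 2k - 1) · e_{n-k}(X) · e_{m+k-1}(X). -/
/-!
Write `G(a, b) = ∑ i, X i * e_a^{ī} * e_b^{ī}`. Splitting off the variable `X i` gives
`e_r = e_r^{ī} + X i * e_{r-1}^{ī}`, and every `r`-subset misses exactly `p - r` indices, so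
`∑ i, e_r^{ī} = (p - r) e_r`. Expanding `∑ i, e_a^{ī} e_b^{ī}` in the two possible ways yields the
exchange relation `G(a, b - 1) - G(a - 1, b) = (b - a) e_a e_b`. Starting from `G(n - 1, m - 1)` and
applying it `p` times telescopes the left-hand side into the right-hand side, up to a remainder
`G(n - 1 - p, m - 1 + p)` that vanishes because `m - 1 + p` exceeds the `p - 1` remaining variables.
-/

open Finset

/-- The `k`-th elementary symmetric polynomial of the values `X i` for `i` in `s`. -/
noncomputable def esym {p : ℕ} (X : Fin p → ℝ) (s : Finset (Fin p)) (k : ℕ) : ℝ :=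
  ∑ t ∈ s.powersetCard k, ∏ i ∈ t, X i

/-- The `r`-th elementary symmetric polynomial in all variables, with the convention
that it vanishes for `r < 0` (and automatically for `r > p`). -/
noncomputable def esymZ {p : ℕ} (X : Fin p → ℝ) (r : ℤ) : ℝ :=
  if 0 ≤ r then esym X univ r.toNat else 0

namespace BracketIdentity

variable {p : ℕ} (X : Fin p → ℝ)

noncomputable def esymInt (s : Finset (Fin p)) (r : ℤ) : ℝ :=
  if 0 ≤ r then esym X s r.toNat else 0

noncomputable def pairSum (a b : ℤ) : ℝ :=
  ∑ i : Fin p, X i * esymInt X (univ.erase i) a * esymInt X (univ.erase i) b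

lemma esymInt_univ (r : ℤ) : esymInt X univ r = esymZ X r := rfl

lemma esymInt_natCast (s : Finset (Fin p)) (k : ℕ) : esymInt X s k = esym X s k := by
  simp [esymInt]

lemma esymInt_eq_zero_of_neg (s : Finset (Fin p)) {r : ℤ} (hr : r < 0) : esymInt X s r = 0 :=
  if_neg hr.not_ge

lemma esymInt_eq_zero_of_card_lt (s : Finset (Fin p)) {r : ℤ} (hr : (#s : ℤ) < r) :
    esymInt X s r = 0 := by
  rw [esymInt, if_pos (by omega), esym, powersetCard_eq_empty.mpr (by omega), sum_empty]

lemma esym_insert {i : Fin p} {s : Finset (Fin p)} (hi : i ∉ s) (k : ℕ) :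
    esym X (insert i s) (k + 1) = esym X s (k + 1) + X i * esym X s k := by
  have hi' : ∀ {j : ℕ}, ∀ t ∈ s.powersetCard j, i ∉ t :=
    fun t ht hit => hi ((mem_powersetCard.mp ht).1 hit)
  have hdisj : Disjoint (s.powersetCard (k + 1)) ((s.powersetCard k).image (insert i)) := by
    refine disjoint_left.mpr fun t ht ht' => ?_
    obtain ⟨u, -, rfl⟩ := mem_image.mp ht'
    exact hi' _ ht (mem_insert_self i u)
  have hinj : Set.InjOn (insert i) (s.powersetCard k : Set (Finset (Fin p))) :=
    fun t ht u hu htu => by rw [← erase_insert (hi' t ht), htu, erase_insert (hi' u hu)]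
  rw [esym, esym, esym, powersetCard_succ_insert hi, sum_union hdisj, sum_image hinj, mul_sum]
  exact congrArg _ (sum_congr rfl fun t ht => prod_insert (hi' t ht))

lemma esymInt_insert {i : Fin p} {s : Finset (Fin p)} (hi : i ∉ s) (r : ℤ) :
    esymInt X (insert i s) r = esymInt X s r + X i * esymInt X s (r - 1) := by
  rcases lt_trichotomy r 0 with hr | rfl | hr
  · simp only [esymInt_eq_zero_of_neg X _ hr, esymInt_eq_zero_of_neg X _ (show r - 1 < 0 by omega)]
    ring
  · simp [esymInt, esym]
  · obtain ⟨k, rfl⟩ : ∃ k : ℕ, r = k + 1 := ⟨(r - 1).toNat, by omega⟩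
    rw [add_sub_cancel_right, ← Nat.cast_succ, esymInt_natCast, esymInt_natCast, esymInt_natCast]
    exact esym_insert X hi k

lemma esymZ_eq_erase_add_mul (i : Fin p) (r : ℤ) :
    esymZ X r = esymInt X (univ.erase i) r + X i * esymInt X (univ.erase i) (r - 1) := by
  rw [← esymInt_univ, ← esymInt_insert X (notMem_erase i univ), insert_erase (mem_univ i)]

lemma sum_esym_erase (k : ℕ) :
    ∑ i : Fin p, esym X (univ.erase i) k = ((p : ℝ) - k) * esym X univ k := by
  simp only [esym]
  rw [sum_comm' (t' := univ.powersetCard k) (s' := fun t => tᶜ) fun i t => by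
    simp [mem_powersetCard, subset_erase]]
  rw [mul_sum]
  refine sum_congr rfl fun t ht => ?_
  have hcard : #t = k := (mem_powersetCard.mp ht).2
  have hk : k ≤ p := hcard ▸ (card_le_univ t).trans_eq (Fintype.card_fin p)
  rw [sum_const, card_compl, Fintype.card_fin, hcard, nsmul_eq_mul, Nat.cast_sub hk]

lemma sum_esymInt_erase (r : ℤ) :
    ∑ i : Fin p, esymInt X (univ.erase i) r = ((p : ℝ) - r) * esymZ X r := by
  rcases lt_or_ge r 0 with hr | hr
  · simp [esymInt_eq_zero_of_neg X _ hr, ← esymInt_univ]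
  · lift r to ℕ using hr
    simpa [esymInt_natCast, ← esymInt_univ] using sum_esym_erase X r

lemma sum_esymInt_erase_mul (a b : ℤ) :
    ∑ i : Fin p, esymInt X (univ.erase i) a * esymInt X (univ.erase i) b
      = ((p : ℝ) - a) * esymZ X a * esymZ X b - pairSum X a (b - 1) := by
  calc ∑ i : Fin p, esymInt X (univ.erase i) a * esymInt X (univ.erase i) b
      = ∑ i : Fin p, (esymInt X (univ.erase i) a * esymZ X b
          - X i * esymInt X (univ.erase i) a * esymInt X (univ.erase i) (b - 1)) :=
        sum_congr rfl fun i _ => by rw [esymZ_eq_erase_add_mul X i b]; ring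
    _ = (∑ i : Fin p, esymInt X (univ.erase i) a) * esymZ X b - pairSum X a (b - 1) := by
        rw [sum_sub_distrib, sum_mul, pairSum]
    _ = ((p : ℝ) - a) * esymZ X a * esymZ X b - pairSum X a (b - 1) := by
        rw [sum_esymInt_erase]

lemma pairSum_comm (a b : ℤ) : pairSum X a b = pairSum X b a :=
  sum_congr rfl fun _ _ => mul_right_comm _ _ _

lemma pairSum_exchange (a b : ℤ) :
    pairSum X a (b - 1) - pairSum X (a - 1) b = ((b : ℝ) - a) * esymZ X a * esymZ X b := by
  have hab := sum_esymInt_erase_mul X a b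
  have hba := sum_esymInt_erase_mul X b a
  simp only [mul_comm (esymInt X _ b), pairSum_comm X b] at hba
  linear_combination hab - hba

lemma pairSum_telescope (a b : ℤ) (t : ℕ) :
    pairSum X (a - 1) (b - 1)
      = ∑ k ∈ Icc 1 t, ((b : ℝ) - a + 2 * k - 1) * esymZ X (a - k) * esymZ X (b + k - 1)
        + pairSum X (a - 1 - t) (b - 1 + t) := by
  induction t with
  | zero => simp
  | succ t ih =>
    rw [ih, sum_Icc_succ_top (by omega), add_assoc]
    refine congrArg _ (eq_add_of_sub_eq ?_)
    convert pairSum_exchange X (a - 1 - t) (b + t) using 2 <;> push_cast <;> ring_nf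

lemma pairSum_eq_zero_of_le (a : ℤ) {b : ℤ} (hb : (p : ℤ) ≤ b) : pairSum X a b = 0 := by
  refine sum_eq_zero fun i _ => ?_
  have hcard : #(univ.erase i) = p - 1 := by simp
  have hp : 0 < p := i.pos
  rw [esymInt_eq_zero_of_card_lt X (univ.erase i) (r := b) (by omega), mul_zero]

end BracketIdentity

open BracketIdentity in
theorem bracket_identity_general {p : ℕ} (X : Fin p → ℝ) (n m : ℕ)
    (h1 : 1 ≤ n) (h2 : n ≤ m) :
    ∑ i : Fin p, X i * esym X (univ.erase i) (n - 1) * esym X (univ.erase i) (m - 1)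
      = ∑ k ∈ Finset.Icc 1 p,
          ((m : ℝ) - n + 2 * k - 1) * esymZ X ((n : ℤ) - k) * esymZ X ((m : ℤ) + k - 1) := by
  have hLHS : ∑ i : Fin p, X i * esym X (univ.erase i) (n - 1) * esym X (univ.erase i) (m - 1)
      = pairSum X ((n : ℤ) - 1) ((m : ℤ) - 1) := by
    simp only [pairSum, ← Nat.cast_one (R := ℤ), ← Nat.cast_sub h1,
      ← Nat.cast_sub (h1.trans h2), esymInt_natCast]
  rw [hLHS, pairSum_telescope X n m p, pairSum_eq_zero_of_le X _ (by omega), add_zero]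
  simp only [Int.cast_natCast]

theorem bracket_identity {p : ℕ} (X : Fin p → ℝ) (n m : ℕ)
    (h1 : 1 ≤ n) (h2 : n ≤ m) (h3 : m ≤ p) :
    ∑ i : Fin p, X i * esym X (univ.erase i) (n - 1) * esym X (univ.erase i) (m - 1)
      = ∑ k ∈ Finset.Icc 1 p,
          ((m : ℝ) - n + 2 * k - 1) * esymZ X ((n : ℤ) - k) * esymZ X ((m : ℤ) + k - 1) :=
  bracket_identity_general X n m h1 h2
end

section
/- Fix integers l ≥ 0, j ≥ 1, and 1 ≤ n ≤ m with 2l + j = n + m - 1, l ≤ n - 1. Then (n - l) · C(j, n - l) = Σ_{k=1}^{n} (m - n + 2k - 1) · C(j, n - k - l). -/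
/-!
With `b = n - k - l`, the constraint `2l + j = n + m - 1` turns the coefficient
`m - n + 2k - 1` into `j - 2b`, and the absorption identity
`(b + 1) C(j, b + 1) = (j - b) C(j, b)` gives
`(j - 2b) C(j, b) = (b + 1) C(j, b + 1) - b C(j, b)`.
The sum therefore telescopes to `(n - l) C(j, n - l) - (-l) C(j, -l)`, and the last term vanishes
because `-l ≤ 0`.
-/

/-- Binomial coefficient on integers, with the convention `C a b = 0` when
`b < 0` or `b > a`. -/
def C (a b : ℤ) : ℤ := if 0 ≤ b ∧ b ≤ a then (a.toNat.choose b.toNat : ℤ) else 0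

open Finset

theorem Int.sum_Icc_one_sub_eq {M : Type*} [AddCommGroup M] (f : ℤ → M) {n : ℤ} (hn : 0 ≤ n) :
    ∑ k ∈ Icc 1 n, (f (k - 1) - f k) = f 0 - f n := by
  induction n, hn using Int.leInduction with
  | base => simp
  | succ n hn ih =>
    rw [← insert_Icc_right_eq_Icc_add_one (by omega), sum_insert (by simp), ih,
      add_sub_cancel_right]
    abel

theorem Nat.succ_mul_choose_succ_eq_sub_mul (n k : ℕ) :
    ((k : ℤ) + 1) * n.choose (k + 1) = (n - k) * n.choose k := by
  rcases le_or_gt k n with hkn | hnk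
  · have key := Nat.choose_succ_right_eq n k
    zify [hkn] at key
    linarith
  · simp [Nat.choose_eq_zero_of_lt hnk, Nat.choose_eq_zero_of_lt (hnk.trans k.lt_succ_self)]

theorem C_natCast (a b : ℕ) : C a b = a.choose b := by
  rcases le_or_gt b a with hba | hab
  · simp [C, hba]
  · simp [C, Nat.choose_eq_zero_of_lt hab, hab.not_ge]

theorem C_eq_zero_of_neg (a : ℤ) {b : ℤ} (hb : b < 0) : C a b = 0 := by
  simp [C, hb.not_ge]

theorem C_eq_zero_of_neg_left {a : ℤ} (b : ℤ) (ha : a < 0) : C a b = 0 := by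
  rw [C, if_neg (by omega)]

theorem mul_C_eq_zero_of_nonpos (a : ℤ) {b : ℤ} (hb : b ≤ 0) : b * C a b = 0 := by
  rcases hb.lt_or_eq with hb | rfl
  · rw [C_eq_zero_of_neg a hb, mul_zero]
  · rw [zero_mul]

theorem succ_mul_C_succ (a b : ℤ) : (b + 1) * C a (b + 1) = (a - b) * C a b := by
  rcases lt_or_ge b 0 with hb | hb
  · rw [C_eq_zero_of_neg a hb, mul_zero, mul_C_eq_zero_of_nonpos a (by omega)]
  rcases lt_or_ge a 0 with ha | ha
  · simp [C_eq_zero_of_neg_left _ ha]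
  lift a to ℕ using ha
  lift b to ℕ using hb
  rw [← Nat.cast_add_one, C_natCast, C_natCast]
  exact_mod_cast Nat.succ_mul_choose_succ_eq_sub_mul a b

theorem combinatorial_identity_general (l j n m : ℤ) (hl : 0 ≤ l)
    (hn : 1 ≤ n) (hdeg : 2 * l + j = n + m - 1) :
    (n - l) * C j (n - l) = ∑ k ∈ Finset.Icc (1 : ℤ) n, (m - n + 2 * k - 1) * C j (n - k - l) := by
  set g : ℤ → ℤ := fun k => (n - l - k) * C j (n - l - k) with hg
  have hterm (k : ℤ) : (m - n + 2 * k - 1) * C j (n - k - l) = g (k - 1) - g k := by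
    have h := succ_mul_C_succ j (n - l - k)
    simp only [hg, show n - l - (k - 1) = n - l - k + 1 by ring, h,
      show n - k - l = n - l - k by ring]
    linear_combination (-C j (n - l - k)) * hdeg
  rw [sum_congr rfl fun k _ => hterm k, Int.sum_Icc_one_sub_eq g (by omega)]
  simp only [hg, sub_zero, show n - l - n = -l by ring,
    mul_C_eq_zero_of_nonpos j (neg_nonpos.mpr hl)]

theorem combinatorial_identity (l j n m : ℤ) (hl : 0 ≤ l) (hj : 1 ≤ j)
    (hn : 1 ≤ n) (hnm : n ≤ m) (hdeg : 2 * l + j = n + m - 1) (hln : l ≤ n - 1) :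
    (n - l) * C j (n - l) = ∑ k ∈ Finset.Icc (1 : ℤ) n, (m - n + 2 * k - 1) * C j (n - k - l) :=
  combinatorial_identity_general l j n m hl hn hdeg
end

section
/- Let X_1,...,X_p be distinct real numbers, and fix a monomial X_1^2···X_l^2·X_{l+1}···X_{l+j} of degree 2l + j = n + m - 1 with 1 ≤ n ≤ m ≤ p, l ≤ n - 1, l + j ≤ p. The coefficient of this monomial in the symmetric polynomial Σ_{i=1}^p X_i e_{n-1}^{ī}(X) e_{m-1}^{ī}(X) (viewed as a polynomial in X_1,...,X_p) equals j · C(j-1, n-1-l). -/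
open Finset MvPolynomial

/-- The `k`-th elementary symmetric polynomial in the variables indexed by `s`. -/
noncomputable def esymP {p : ℕ} (s : Finset (Fin p)) (k : ℕ) : MvPolynomial (Fin p) ℝ :=
  ∑ t ∈ s.powersetCard k, ∏ i ∈ t, MvPolynomial.X i

namespace CoeffLhsAux

variable {p : ℕ}

/-- The indicator finsupp of a finset. -/
noncomputable def sig (S : Finset (Fin p)) : Fin p →₀ ℕ := ∑ a ∈ S, Finsupp.single a 1

lemma sig_apply (S : Finset (Fin p)) (b : Fin p) :
    sig S b = if b ∈ S then 1 else 0 := by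
  classical
  simp only [sig, Finsupp.finset_sum_apply, Finsupp.single_apply]
  rw [Finset.sum_ite_eq']

lemma prod_X_eq (S : Finset (Fin p)) :
    (∏ a ∈ S, (X a : MvPolynomial (Fin p) ℝ)) = monomial (sig S) 1 := by
  classical
  induction S using Finset.induction_on with
  | empty => simp [sig]
  | @insert a s ha ih =>
    have hs : sig (insert a s) = Finsupp.single a 1 + sig s := by
      rw [sig, Finset.sum_insert ha]; rfl
    rw [Finset.prod_insert ha, ih, hs, ← pow_one (X a), X_pow_eq_monomial,
      monomial_mul, one_mul]

lemma coeff_term (d : Fin p →₀ ℕ) (i : Fin p) (n m : ℕ) :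
    MvPolynomial.coeff d
        (MvPolynomial.X i * esymP (univ.erase i) (n - 1) * esymP (univ.erase i) (m - 1))
      = ∑ S ∈ (univ.erase i).powersetCard (n-1), ∑ T ∈ (univ.erase i).powersetCard (m-1),
          (if Finsupp.single i 1 + sig S + sig T = d then (1:ℝ) else 0) := by
  classical
  simp only [esymP, Finset.mul_sum, Finset.sum_mul, prod_X_eq, coeff_sum]
  rw [Finset.sum_comm]
  refine Finset.sum_congr rfl fun S hS => Finset.sum_congr rfl fun T hT => ?_
  rw [← pow_one (X i), X_pow_eq_monomial, monomial_mul, monomial_mul, coeff_monomial]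
  simp

lemma card_filter_lt (k : ℕ) (hk : k ≤ p) :
    ((univ : Finset (Fin p)).filter fun a : Fin p => (a:ℕ) < k).card = k := by
  classical
  have himg : ((univ : Finset (Fin p)).filter fun a : Fin p => (a:ℕ) < k).image Fin.val
      = Finset.range k := by
    ext x
    simp only [Finset.mem_image, Finset.mem_filter, Finset.mem_univ, true_and,
      Finset.mem_range]
    constructor
    · rintro ⟨a, ha, rfl⟩; exact ha
    · intro hx; exact ⟨⟨x, lt_of_lt_of_le hx hk⟩, hx, rfl⟩
  have := Finset.card_image_of_injective
    ((univ : Finset (Fin p)).filter fun a : Fin p => (a:ℕ) < k) Fin.val_injective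
  rw [himg, Finset.card_range] at this
  omega

end CoeffLhsAux

open CoeffLhsAux

theorem coeff_lhs_monomial {p l j n m : ℕ}
    (hj : 1 ≤ j) (hn : 1 ≤ n) (hnm : n ≤ m) (hmp : m ≤ p)
    (hln : l + 1 ≤ n) (hljp : l + j ≤ p) (hdeg : 2 * l + j = n + m - 1)
    (d : Fin p →₀ ℕ)
    (hd : ∀ i : Fin p, d i = if (i : ℕ) < l then 2 else if (i : ℕ) < l + j then 1 else 0) :
    MvPolynomial.coeff d
        (∑ i : Fin p, MvPolynomial.X i * esymP (univ.erase i) (n - 1)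
            * esymP (univ.erase i) (m - 1))
      = (j : ℝ) * ((j - 1).choose (n - 1 - l) : ℝ) := by
  classical
  set L : Finset (Fin p) := univ.filter (fun a => (a:ℕ) < l) with hLdef
  set J : Finset (Fin p) := univ.filter (fun a => l ≤ (a:ℕ) ∧ (a:ℕ) < l + j) with hJdef
  have hmemL : ∀ a : Fin p, a ∈ L ↔ (a:ℕ) < l := by intro a; simp [hLdef]
  have hmemJ : ∀ a : Fin p, a ∈ J ↔ (l ≤ (a:ℕ) ∧ (a:ℕ) < l + j) := by intro a; simp [hJdef]
  have hdisj : Disjoint L J := by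
    rw [Finset.disjoint_left]
    intro a haL haJ
    rw [hmemL] at haL; rw [hmemJ] at haJ; omega
  have hcardL : L.card = l := card_filter_lt l (by omega)
  have hLJ : L ∪ J = univ.filter (fun a : Fin p => (a:ℕ) < l + j) := by
    ext a
    simp only [Finset.mem_union, hmemL, hmemJ, Finset.mem_filter, Finset.mem_univ, true_and]
    omega
  have hcardJ : J.card = j := by
    have h1 := Finset.card_union_of_disjoint hdisj
    rw [hLJ, card_filter_lt (l+j) hljp, hcardL] at h1
    omega
  -- the pointwise description of the key equation
  have hpt : ∀ (i : Fin p) (S T : Finset (Fin p)),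
      (Finsupp.single i 1 + sig S + sig T = d) ↔
      (∀ a : Fin p, (if i = a then 1 else 0) + (if a ∈ S then 1 else 0)
          + (if a ∈ T then 1 else 0) = d a) := by
    intro i S T
    rw [Finsupp.ext_iff]
    apply forall_congr'
    intro a
    simp [Finsupp.single_apply, sig_apply]
  -- characterization of solutions, for i ∈ J
  have hchar : ∀ i : Fin p, i ∈ J → ∀ S T : Finset (Fin p), i ∉ S → i ∉ T →
      ((Finsupp.single i 1 + sig S + sig T = d) ↔
        (L ⊆ S ∧ S ⊆ L ∪ (J.erase i) ∧ T = L ∪ ((J.erase i) \ S))) := by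
    intro i hiJ S T hiS hiT
    have hil : l ≤ (i:ℕ) ∧ (i:ℕ) < l + j := (hmemJ i).1 hiJ
    rw [hpt]
    constructor
    · intro h
      refine ⟨?_, ?_, ?_⟩
      · intro a ha
        have hal : (a:ℕ) < l := (hmemL a).1 ha
        have hne : i ≠ a := by intro e; rw [← e] at hal; omega
        have h1 := h a
        rw [hd a, if_neg hne, if_pos hal] at h1
        by_contra hc
        rw [if_neg hc] at h1
        split_ifs at h1 <;> omega
      · intro a haS
        have hne : i ≠ a := by intro e; rw [← e] at haS; exact hiS haS
        have h1 := h a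
        rw [hd a, if_neg hne, if_pos haS] at h1
        by_cases hal : (a:ℕ) < l
        · exact Finset.mem_union_left _ ((hmemL a).2 hal)
        · rw [if_neg hal] at h1
          have halj : (a:ℕ) < l + j := by
            by_contra hc; rw [if_neg hc] at h1; split_ifs at h1 <;> omega
          refine Finset.mem_union_right _ (Finset.mem_erase.2 ⟨fun e => hne e.symm, ?_⟩)
          exact (hmemJ a).2 ⟨le_of_not_gt hal, halj⟩
      · ext a
        by_cases h2 : i = a
        · subst h2
          simp only [Finset.mem_union, Finset.mem_sdiff, Finset.mem_erase, hmemL, hmemJ]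
          constructor
          · intro hT; exact absurd hT hiT
          · rintro (h3 | ⟨⟨h3, _⟩, _⟩)
            · omega
            · exact absurd rfl h3
        · have hne : a ≠ i := fun e => h2 e.symm
          have h1 := h a
          rw [hd a, if_neg h2] at h1
          simp only [Finset.mem_union, Finset.mem_sdiff, Finset.mem_erase, hmemL, hmemJ]
          by_cases h3 : a ∈ S <;> by_cases h4 : a ∈ T <;>
            simp only [h3, h4, if_true, if_false] at h1 <;>
            split_ifs at h1 <;>
            simp [h3, h4, hne] <;> omega
    · rintro ⟨hLS, hSsub, hTeq⟩ a
      rw [hd a]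
      by_cases h2 : i = a
      · subst h2
        rw [if_pos rfl, if_neg hiS, if_neg hiT]
        split_ifs <;> omega
      · have hne : a ≠ i := fun e => h2 e.symm
        have hTa : (a ∈ T) ↔ ((a:ℕ) < l ∨ ((l ≤ (a:ℕ) ∧ (a:ℕ) < l + j) ∧ a ∉ S)) := by
          rw [hTeq]
          simp only [Finset.mem_union, Finset.mem_sdiff, Finset.mem_erase, hmemL, hmemJ]
          constructor
          · rintro (h5 | ⟨⟨_, h5⟩, h6⟩)
            · exact Or.inl h5
            · exact Or.inr ⟨h5, h6⟩
          · rintro (h5 | ⟨h5, h6⟩)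
            · exact Or.inl h5
            · exact Or.inr ⟨⟨hne, h5⟩, h6⟩
        have hSa1 : (a:ℕ) < l → a ∈ S := fun h => hLS ((hmemL a).2 h)
        have hSa2 : a ∈ S → (a:ℕ) < l ∨ (l ≤ (a:ℕ) ∧ (a:ℕ) < l + j) := by
          intro h
          have h5 := hSsub h
          simp only [Finset.mem_union, Finset.mem_erase, hmemL, hmemJ] at h5
          tauto
        rw [if_neg h2]
        by_cases h3 : a ∈ S <;> by_cases h4 : a ∈ T
        · have h5 : (a:ℕ) < l := by
            rcases hTa.1 h4 with h5 | ⟨_, h6⟩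
            · exact h5
            · exact absurd h3 h6
          rw [if_pos h3, if_pos h4, if_pos h5]
        · have h5 : l ≤ (a:ℕ) ∧ (a:ℕ) < l + j := by
            rcases hSa2 h3 with h5 | h5
            · exact absurd (hTa.2 (Or.inl h5)) h4
            · exact h5
          rw [if_pos h3, if_neg h4, if_neg (by omega), if_pos (by omega)]
        · have h5 : l ≤ (a:ℕ) ∧ (a:ℕ) < l + j := by
            rcases hTa.1 h4 with h5 | ⟨h5, _⟩
            · exact absurd (hSa1 h5) h3
            · exact h5
          rw [if_neg h3, if_pos h4, if_neg (by omega), if_pos (by omega)]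
        · have h5 : ¬ (a:ℕ) < l := fun h => h3 (hSa1 h)
          have h6 : ¬ (a:ℕ) < l + j := by
            intro h
            exact h4 (hTa.2 (Or.inr ⟨⟨le_of_not_gt h5, h⟩, h3⟩))
          rw [if_neg h3, if_neg h4, if_neg h5, if_neg h6]
  -- count of solution pairs for each i
  have hcount : ∀ i : Fin p,
      ((((univ.erase i).powersetCard (n-1)) ×ˢ ((univ.erase i).powersetCard (m-1))).filter
        (fun ST : Finset (Fin p) × Finset (Fin p) =>
          Finsupp.single i 1 + sig ST.1 + sig ST.2 = d)).card
      = if i ∈ J then (j-1).choose (n-1-l) else 0 := by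
    intro i
    by_cases hiJ : i ∈ J
    · rw [if_pos hiJ]
      have hil : l ≤ (i:ℕ) ∧ (i:ℕ) < l + j := (hmemJ i).1 hiJ
      have hiL : i ∉ L := by rw [hmemL]; omega
      have hiJE : i ∉ J.erase i := Finset.notMem_erase i J
      have hcardJE : (J.erase i).card = j - 1 := by
        rw [Finset.card_erase_of_mem hiJ, hcardJ]
      have hmain : ((((univ.erase i).powersetCard (n-1)) ×ˢ
            ((univ.erase i).powersetCard (m-1))).filter
          (fun ST : Finset (Fin p) × Finset (Fin p) =>
            Finsupp.single i 1 + sig ST.1 + sig ST.2 = d)).card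
          = ((J.erase i).powersetCard (n-1-l)).card := by
        apply Finset.card_bij' (fun ST _ => ST.1 \ L)
          (fun U _ => (L ∪ U, L ∪ ((J.erase i) \ U)))
        · -- forward map lands in target
          rintro ⟨S, T⟩ hST
          rw [Finset.mem_filter, Finset.mem_product, Finset.mem_powersetCard,
            Finset.mem_powersetCard] at hST
          obtain ⟨⟨⟨hSsub', hScard⟩, ⟨hTsub', hTcard⟩⟩, heq⟩ := hST
          have hiS : i ∉ S := fun h => (Finset.mem_erase.1 (hSsub' h)).1 rfl
          have hiT : i ∉ T := fun h => (Finset.mem_erase.1 (hTsub' h)).1 rfl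
          obtain ⟨hLS, hSsub, _⟩ := (hchar i hiJ S T hiS hiT).1 heq
          rw [Finset.mem_powersetCard]
          constructor
          · intro a ha
            rw [Finset.mem_sdiff] at ha
            rcases Finset.mem_union.1 (hSsub ha.1) with h | h
            · exact absurd h ha.2
            · exact h
          · show (S \ L).card = n - 1 - l
            have hScard' : S.card = n - 1 := hScard
            rw [Finset.card_sdiff_of_subset hLS, hScard', hcardL]
        · -- backward map lands in source
          intro U hU
          rw [Finset.mem_powersetCard] at hU
          obtain ⟨hUsub, hUcard⟩ := hU
          have hdisjLU : Disjoint L U := by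
            rw [Finset.disjoint_left]
            intro a haL haU
            have h5 := Finset.mem_of_mem_erase (hUsub haU)
            rw [hmemJ] at h5; rw [hmemL] at haL; omega
          have hdisjLX : Disjoint L ((J.erase i) \ U) := by
            rw [Finset.disjoint_left]
            intro a haL haX
            have h5 := Finset.mem_of_mem_erase (Finset.mem_sdiff.1 haX).1
            rw [hmemJ] at h5; rw [hmemL] at haL; omega
          have hSsubU : L ∪ U ⊆ univ.erase i := by
            intro a ha
            rw [Finset.mem_erase]
            refine ⟨?_, Finset.mem_univ a⟩
            rintro rfl
            rcases Finset.mem_union.1 ha with h | h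
            · exact hiL h
            · exact hiJE (hUsub h)
          have hTsubU : L ∪ ((J.erase i) \ U) ⊆ univ.erase i := by
            intro a ha
            rw [Finset.mem_erase]
            refine ⟨?_, Finset.mem_univ a⟩
            rintro rfl
            rcases Finset.mem_union.1 ha with h | h
            · exact hiL h
            · exact hiJE (Finset.mem_sdiff.1 h).1
          have hiSU : i ∉ L ∪ U := fun h => (Finset.mem_erase.1 (hSsubU h)).1 rfl
          have hiTU : i ∉ L ∪ ((J.erase i) \ U) := fun h => (Finset.mem_erase.1 (hTsubU h)).1 rfl
          rw [Finset.mem_filter, Finset.mem_product, Finset.mem_powersetCard,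
            Finset.mem_powersetCard]
          refine ⟨⟨⟨hSsubU, ?_⟩, ⟨hTsubU, ?_⟩⟩, ?_⟩
          · rw [Finset.card_union_of_disjoint hdisjLU, hcardL, hUcard]
            omega
          · rw [Finset.card_union_of_disjoint hdisjLX, hcardL, Finset.card_sdiff_of_subset hUsub,
              hcardJE, hUcard]
            omega
          · refine (hchar i hiJ _ _ hiSU hiTU).2 ⟨Finset.subset_union_left, ?_, ?_⟩
            · exact Finset.union_subset_union_right hUsub
            · congr 1
              ext a
              simp only [Finset.mem_sdiff, Finset.mem_union]
              constructor
              · rintro ⟨h1, h2⟩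
                refine ⟨h1, ?_⟩
                rintro (h3 | h3)
                · have h5 := Finset.mem_of_mem_erase h1
                  rw [hmemJ] at h5; rw [hmemL] at h3; omega
                · exact h2 h3
              · rintro ⟨h1, h2⟩
                exact ⟨h1, fun h => h2 (Or.inr h)⟩
        · -- left inverse
          rintro ⟨S, T⟩ hST
          rw [Finset.mem_filter, Finset.mem_product, Finset.mem_powersetCard,
            Finset.mem_powersetCard] at hST
          obtain ⟨⟨⟨hSsub', hScard⟩, ⟨hTsub', hTcard⟩⟩, heq⟩ := hST
          have hiS : i ∉ S := fun h => (Finset.mem_erase.1 (hSsub' h)).1 rfl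
          have hiT : i ∉ T := fun h => (Finset.mem_erase.1 (hTsub' h)).1 rfl
          obtain ⟨hLS, hSsub, hTeq⟩ := (hchar i hiJ S T hiS hiT).1 heq
          have h1 : L ∪ (S \ L) = S := Finset.union_sdiff_of_subset hLS
          have h2 : (J.erase i) \ (S \ L) = (J.erase i) \ S := by
            ext a
            simp only [Finset.mem_sdiff]
            constructor
            · rintro ⟨ha, hb⟩
              have haL : a ∉ L := by
                have h5 := Finset.mem_of_mem_erase ha
                rw [hmemJ] at h5; rw [hmemL]; omega
              exact ⟨ha, fun h => hb ⟨h, haL⟩⟩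
            · rintro ⟨ha, hb⟩
              exact ⟨ha, fun h => hb h.1⟩
          rw [Prod.ext_iff]
          exact ⟨h1, by rw [h2, ← hTeq]⟩
        · -- right inverse
          intro U hU
          rw [Finset.mem_powersetCard] at hU
          have hdisjLU : Disjoint L U := by
            rw [Finset.disjoint_left]
            intro a haL haU
            have h5 := Finset.mem_of_mem_erase (hU.1 haU)
            rw [hmemJ] at h5; rw [hmemL] at haL; omega
          exact Finset.union_sdiff_cancel_left hdisjLU
      rw [hmain, Finset.card_powersetCard, hcardJE]
    · rw [if_neg hiJ]
      rw [Finset.card_eq_zero, Finset.eq_empty_iff_forall_notMem]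
      rintro ⟨S, T⟩ hST
      rw [Finset.mem_filter, Finset.mem_product, Finset.mem_powersetCard,
        Finset.mem_powersetCard] at hST
      obtain ⟨⟨⟨hSsub', _⟩, ⟨hTsub', _⟩⟩, heq⟩ := hST
      have hiS : i ∉ S := fun h => (Finset.mem_erase.1 (hSsub' h)).1 rfl
      have hiT : i ∉ T := fun h => (Finset.mem_erase.1 (hTsub' h)).1 rfl
      have h1 := ((hpt i S T).1 heq) i
      rw [hd i, if_pos rfl, if_neg hiS, if_neg hiT] at h1
      rw [hmemJ] at hiJ
      split_ifs at h1 <;> omega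
  -- put everything together
  rw [MvPolynomial.coeff_sum]
  have hterm : ∀ i : Fin p,
      MvPolynomial.coeff d (MvPolynomial.X i * esymP (univ.erase i) (n - 1)
          * esymP (univ.erase i) (m - 1))
      = (if i ∈ J then ((j-1).choose (n-1-l) : ℝ) else 0) := by
    intro i
    rw [coeff_term, ← Finset.sum_product']
    rw [Finset.sum_boole]
    rw [hcount i]
    split_ifs <;> simp
  rw [Finset.sum_congr rfl (fun i _ => hterm i)]
  rw [Finset.sum_ite_mem, Finset.univ_inter, Finset.sum_const, hcardJ, nsmul_eq_mul]
end

section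
/- Let X_1,...,X_p be variables and fix a monomial X_1^2···X_l^2·X_{l+1}···X_{l+j} with 2l + j = n + m - 1, 1 ≤ n ≤ m ≤ p, l + j ≤ p. For each integer k ≥ 1, the coefficient of this monomial in the product e_{n-k}(X)·e_{m+k-1}(X) equals C(j, n - k - l). -/
open Finset MvPolynomial

/-- The `r`-th elementary symmetric polynomial with the convention `e_r = 0` for `r < 0`
(and automatically for `r > p`). -/
noncomputable def esymPZ {p : ℕ} (r : ℤ) : MvPolynomial (Fin p) ℝ :=
  if 0 ≤ r then esymP univ r.toNat else 0

noncomputable def ind {p : ℕ} (t : Finset (Fin p)) : Fin p →₀ ℕ :=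
  ∑ i ∈ t, Finsupp.single i 1

lemma ind_apply {p : ℕ} (t : Finset (Fin p)) (i : Fin p) :
    ind t i = if i ∈ t then 1 else 0 := by
  classical
  simp [ind, Finsupp.finset_sum_apply, Finsupp.single_apply]

lemma esymP_eq {p : ℕ} (k : ℕ) :
    esymP (univ : Finset (Fin p)) k = ∑ t ∈ powersetCard k univ, monomial (ind t) 1 := by
  rw [show esymP (univ : Finset (Fin p)) k = MvPolynomial.esymm (Fin p) ℝ k from rfl,
    esymm_eq_sum_monomial]
  rfl

lemma coeff_esymP_mul {p : ℕ} (a b : ℕ) (d : Fin p →₀ ℕ) :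
    MvPolynomial.coeff d (esymP univ a * esymP univ b) =
      ((((univ.powersetCard a) ×ˢ (univ.powersetCard b)).filter
        (fun st => ind st.1 + ind st.2 = d)).card : ℝ) := by
  classical
  rw [esymP_eq, esymP_eq, Finset.sum_mul_sum]
  simp_rw [monomial_mul, one_mul]
  rw [← Finset.sum_product']
  rw [MvPolynomial.coeff_sum]
  simp_rw [coeff_monomial]
  rw [Finset.sum_ite, Finset.sum_const, Finset.sum_const]
  simp

lemma card_filter_lt {p l : ℕ} (hlp : l ≤ p) :
    ((univ : Finset (Fin p)).filter (fun i : Fin p => (i : ℕ) < l)).card = l := by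
  have h : ((univ : Finset (Fin p)).filter (fun i : Fin p => (i : ℕ) < l))
      = (Finset.range l).attachFin
        (fun m hm => lt_of_lt_of_le (Finset.mem_range.mp hm) hlp) := by
    ext i; simp [Finset.mem_attachFin]
  rw [h, Finset.card_attachFin, Finset.card_range]

lemma card_filter_mid {p l j : ℕ} (hljp : l + j ≤ p) :
    ((univ : Finset (Fin p)).filter
      (fun i : Fin p => l ≤ (i : ℕ) ∧ (i : ℕ) < l + j)).card = j := by
  have h : ((univ : Finset (Fin p)).filter (fun i : Fin p => l ≤ (i : ℕ) ∧ (i : ℕ) < l + j))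
      = (Finset.Ico l (l + j)).attachFin
        (fun m hm => lt_of_lt_of_le (Finset.mem_Ico.mp hm).2 hljp) := by
    ext i; simp [Finset.mem_attachFin]
  rw [h, Finset.card_attachFin, Nat.card_Ico]
  omega

lemma count {p l j a b : ℕ} (hljp : l + j ≤ p) (hab : a + b = 2 * l + j)
    (d : Fin p →₀ ℕ)
    (hd : ∀ i : Fin p, d i = if (i : ℕ) < l then 2 else if (i : ℕ) < l + j then 1 else 0) :
    ((((univ : Finset (Fin p)).powersetCard a) ×ˢ (univ.powersetCard b)).filter
        (fun st => ind st.1 + ind st.2 = d)).card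
      = if l ≤ a then j.choose (a - l) else 0 := by
  classical
  set A : Finset (Fin p) := univ.filter (fun i : Fin p => (i : ℕ) < l) with hA
  set B : Finset (Fin p) := univ.filter (fun i : Fin p => l ≤ (i : ℕ) ∧ (i : ℕ) < l + j) with hB
  have hAmem : ∀ i : Fin p, i ∈ A ↔ (i : ℕ) < l := by intro i; simp [hA]
  have hBmem : ∀ i : Fin p, i ∈ B ↔ l ≤ (i : ℕ) ∧ (i : ℕ) < l + j := by intro i; simp [hB]
  have hAcard : A.card = l := card_filter_lt (le_trans (Nat.le_add_right l j) hljp)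
  have hBcard : B.card = j := card_filter_mid hljp
  have hABdisj : Disjoint A B := by
    rw [Finset.disjoint_left]; intro i hi hi'
    rw [hAmem] at hi; rw [hBmem] at hi'; omega
  have key : ∀ S T : Finset (Fin p), (ind S + ind T = d) ↔
      ∀ i : Fin p, ((if i ∈ S then 1 else 0) + (if i ∈ T then 1 else 0) : ℕ)
        = if (i : ℕ) < l then 2 else if (i : ℕ) < l + j then 1 else 0 := by
    intro S T
    constructor
    · intro h i
      have := DFunLike.congr_fun h i
      simpa [ind_apply, hd i, Finsupp.add_apply] using this
    · intro h
      ext i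
      simpa [ind_apply, hd i, Finsupp.add_apply] using h i
  -- facts about any pair in the filter
  have facts : ∀ S T : Finset (Fin p),
      (∀ i : Fin p, ((if i ∈ S then 1 else 0) + (if i ∈ T then 1 else 0) : ℕ)
        = if (i : ℕ) < l then 2 else if (i : ℕ) < l + j then 1 else 0) →
      A ⊆ S ∧ A ⊆ T ∧ S ⊆ A ∪ B ∧ T ⊆ A ∪ B ∧ T ∩ B = B \ (S ∩ B) := by
    intro S T hstd
    have hAS : A ⊆ S := by
      intro i hi
      rw [hAmem] at hi
      have h := hstd i
      rw [if_pos hi] at h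
      by_contra hc
      rw [if_neg hc] at h
      split at h <;> omega
    have hAT : A ⊆ T := by
      intro i hi
      rw [hAmem] at hi
      have h := hstd i
      rw [if_pos hi] at h
      by_contra hc
      rw [if_neg hc] at h
      split at h <;> omega
    have hSAB : S ⊆ A ∪ B := by
      intro i hi
      have h := hstd i
      rw [if_pos hi] at h
      rw [Finset.mem_union, hAmem, hBmem]
      by_cases h1 : (i : ℕ) < l
      · exact Or.inl h1
      · right
        refine ⟨le_of_not_gt h1, ?_⟩
        by_contra h2
        rw [if_neg h1, if_neg h2] at h
        split at h <;> omega
    have hTAB : T ⊆ A ∪ B := by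
      intro i hi
      have h := hstd i
      rw [if_pos hi] at h
      rw [Finset.mem_union, hAmem, hBmem]
      by_cases h1 : (i : ℕ) < l
      · exact Or.inl h1
      · right
        refine ⟨le_of_not_gt h1, ?_⟩
        by_contra h2
        rw [if_neg h1, if_neg h2] at h
        split at h <;> omega
    refine ⟨hAS, hAT, hSAB, hTAB, ?_⟩
    ext i
    rw [Finset.mem_inter, Finset.mem_sdiff, Finset.mem_inter]
    constructor
    · rintro ⟨hiT, hiB⟩
      refine ⟨hiB, ?_⟩
      rintro ⟨hiS, -⟩
      have h := hstd i
      rw [hBmem] at hiB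
      rw [if_pos hiT, if_pos hiS, if_neg (show ¬(i : ℕ) < l by omega), if_pos hiB.2] at h
      omega
    · rintro ⟨hiB, hns⟩
      refine ⟨?_, hiB⟩
      have hiS : i ∉ S := fun h => hns ⟨h, hiB⟩
      by_contra hc
      have h := hstd i
      rw [hBmem] at hiB
      rw [if_neg hiS, if_neg hc, if_neg (show ¬(i : ℕ) < l by omega), if_pos hiB.2] at h
      omega
  have main : ((((univ : Finset (Fin p)).powersetCard a) ×ˢ (univ.powersetCard b)).filter
        (fun st => ind st.1 + ind st.2 = d)).card
      = (B.powerset.filter (fun U => U.card + l = a)).card := by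
    apply Finset.card_bij' (fun st _ => st.1 ∩ B) (fun U _ => (A ∪ U, A ∪ (B \ U)))
    · rintro ⟨S, T⟩ hst
      rw [Finset.mem_filter, Finset.mem_product, Finset.mem_powersetCard_univ,
        Finset.mem_powersetCard_univ] at hst
      obtain ⟨⟨hSa, hTb⟩, hstd⟩ := hst
      rw [key] at hstd
      obtain ⟨hAS, -, hSAB, -, -⟩ := facts S T hstd
      rw [Finset.mem_filter, Finset.mem_powerset]
      refine ⟨Finset.inter_subset_right, ?_⟩
      have hSeq : S = A ∪ (S ∩ B) := by
        apply Finset.Subset.antisymm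
        · intro i hi
          rcases Finset.mem_union.mp (hSAB hi) with h | h
          · exact Finset.mem_union_left _ h
          · exact Finset.mem_union_right _ (Finset.mem_inter.mpr ⟨hi, h⟩)
        · exact Finset.union_subset hAS Finset.inter_subset_left
      have hcard : S.card = A.card + (S ∩ B).card := by
        conv_lhs => rw [hSeq]
        exact Finset.card_union_of_disjoint
          (Finset.disjoint_of_subset_right Finset.inter_subset_right hABdisj)
      simp only at hSa hcard ⊢
      omega
    · intro U hU
      rw [Finset.mem_filter, Finset.mem_powerset] at hU
      obtain ⟨hUB, hUcard⟩ := hU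
      have hUj : U.card ≤ j := hBcard ▸ Finset.card_le_card hUB
      have hdisj1 : Disjoint A U := Finset.disjoint_of_subset_right hUB hABdisj
      have hdisj2 : Disjoint A (B \ U) :=
        Finset.disjoint_of_subset_right (Finset.sdiff_subset) hABdisj
      rw [Finset.mem_filter, Finset.mem_product, Finset.mem_powersetCard_univ,
        Finset.mem_powersetCard_univ]
      refine ⟨⟨?_, ?_⟩, ?_⟩
      · rw [Finset.card_union_of_disjoint hdisj1, hAcard]; omega
      · rw [Finset.card_union_of_disjoint hdisj2, hAcard, Finset.card_sdiff_of_subset hUB, hBcard]; omega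
      · rw [key]
        intro i
        by_cases h1 : (i : ℕ) < l
        · have hiA : i ∈ A := (hAmem i).mpr h1
          rw [if_pos (Finset.mem_union_left _ hiA), if_pos (Finset.mem_union_left _ hiA),
            if_pos h1]
        · by_cases h2 : (i : ℕ) < l + j
          · have hiB : i ∈ B := (hBmem i).mpr ⟨le_of_not_gt h1, h2⟩
            have hiA : i ∉ A := fun h => h1 ((hAmem i).mp h)
            rw [if_neg h1, if_pos h2]
            by_cases h3 : i ∈ U
            · have : i ∉ B \ U := fun h => (Finset.mem_sdiff.mp h).2 h3
              rw [if_pos (Finset.mem_union_right _ h3),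
                if_neg (by simp only [Finset.mem_union, not_or]; exact ⟨hiA, this⟩)]
            · rw [if_neg (by simp only [Finset.mem_union, not_or]; exact ⟨hiA, h3⟩),
                if_pos (Finset.mem_union_right _ (Finset.mem_sdiff.mpr ⟨hiB, h3⟩))]
          · have hiA : i ∉ A := fun h => h1 ((hAmem i).mp h)
            have hiB : i ∉ B := fun h => h2 ((hBmem i).mp h).2
            have hiU : i ∉ U := fun h => hiB (hUB h)
            have hiBU : i ∉ B \ U := fun h => hiB (Finset.mem_sdiff.mp h).1
            rw [if_neg h1, if_neg h2,
              if_neg (by simp only [Finset.mem_union, not_or]; exact ⟨hiA, hiU⟩),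
              if_neg (by simp only [Finset.mem_union, not_or]; exact ⟨hiA, hiBU⟩)]
    · rintro ⟨S, T⟩ hst
      rw [Finset.mem_filter, Finset.mem_product, Finset.mem_powersetCard_univ,
        Finset.mem_powersetCard_univ] at hst
      obtain ⟨⟨hSa, hTb⟩, hstd⟩ := hst
      rw [key] at hstd
      obtain ⟨hAS, hAT, hSAB, hTAB, hTB⟩ := facts S T hstd
      have hSeq : A ∪ (S ∩ B) = S := by
        apply Finset.Subset.antisymm
        · exact Finset.union_subset hAS Finset.inter_subset_left
        · intro i hi
          rcases Finset.mem_union.mp (hSAB hi) with h | h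
          · exact Finset.mem_union_left _ h
          · exact Finset.mem_union_right _ (Finset.mem_inter.mpr ⟨hi, h⟩)
      have hTeq : A ∪ (B \ (S ∩ B)) = T := by
        rw [← hTB]
        apply Finset.Subset.antisymm
        · exact Finset.union_subset hAT Finset.inter_subset_left
        · intro i hi
          rcases Finset.mem_union.mp (hTAB hi) with h | h
          · exact Finset.mem_union_left _ h
          · exact Finset.mem_union_right _ (Finset.mem_inter.mpr ⟨hi, h⟩)
      exact Prod.ext hSeq hTeq
    · intro U hU
      rw [Finset.mem_filter, Finset.mem_powerset] at hU
      obtain ⟨hUB, -⟩ := hU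
      show (A ∪ U) ∩ B = U
      rw [Finset.union_inter_distrib_right,
        Finset.inter_eq_left.mpr hUB,
        (Finset.disjoint_iff_inter_eq_empty.mp hABdisj)]
      exact Finset.empty_union U
  rw [main]
  by_cases hla : l ≤ a
  · rw [if_pos hla]
    have heq : B.powerset.filter (fun U => U.card + l = a) = B.powersetCard (a - l) := by
      ext U
      rw [Finset.mem_filter, Finset.mem_powerset, Finset.mem_powersetCard]
      constructor
      · rintro ⟨h1, h2⟩; exact ⟨h1, by omega⟩
      · rintro ⟨h1, h2⟩; exact ⟨h1, by omega⟩
    rw [heq, Finset.card_powersetCard, hBcard]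
  · rw [if_neg hla]
    rw [Finset.card_eq_zero, Finset.filter_eq_empty_iff]
    intro U _
    omega

theorem coeff_rhs_monomial {p l j n m : ℕ}
    (hn : 1 ≤ n) (hnm : n ≤ m) (hmp : m ≤ p)
    (hljp : l + j ≤ p) (hdeg : 2 * l + j = n + m - 1)
    (k : ℕ) (hk : 1 ≤ k)
    (d : Fin p →₀ ℕ)
    (hd : ∀ i : Fin p, d i = if (i : ℕ) < l then 2 else if (i : ℕ) < l + j then 1 else 0) :
    MvPolynomial.coeff d
        (esymPZ (p := p) ((n : ℤ) - k) * esymPZ (p := p) ((m : ℤ) + k - 1))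
      = (C (j : ℤ) ((n : ℤ) - k - l) : ℝ) := by
  classical
  by_cases hnk : (0 : ℤ) ≤ (n : ℤ) - k
  · have hmk : (0 : ℤ) ≤ (m : ℤ) + k - 1 := by omega
    rw [esymPZ, if_pos hnk, esymPZ, if_pos hmk]
    set a := ((n : ℤ) - k).toNat with ha
    set b := ((m : ℤ) + k - 1).toNat with hb
    have haa : (a : ℤ) = (n : ℤ) - k := Int.toNat_of_nonneg hnk
    have hbb : (b : ℤ) = (m : ℤ) + k - 1 := Int.toNat_of_nonneg hmk
    have hab : a + b = 2 * l + j := by omega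
    rw [coeff_esymP_mul, count hljp hab d hd]
    unfold _root_.C
    by_cases hla : l ≤ a
    · by_cases hj : (a : ℤ) - l ≤ j
      · rw [if_pos hla, if_pos ⟨by omega, by omega⟩]
        have h1 : ((j : ℤ)).toNat = j := by omega
        have h2 : ((n : ℤ) - k - l).toNat = a - l := by omega
        rw [h1, h2]
        norm_cast
      · rw [if_pos hla, if_neg (by omega)]
        rw [Nat.choose_eq_zero_of_lt (by omega)]
        simp
    · rw [if_neg hla, if_neg (by omega)]
      simp
  · rw [esymPZ, if_neg hnk, zero_mul, MvPolynomial.coeff_zero]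
    rw [_root_.C, if_neg (by omega)]
    simp
end

section
/- For real variables X_1,...,X_p (p ≥ 1) and n = m in the bracket identity: Σ_{i=1}^p X_i (e_{n-1}^{ī}(X))^2 = Σ_{k=1}^{p} (2k-1) e_{n-k}(X) e_{n+k-1}(X) for every 1 ≤ n ≤ p. -/
/-!
Deleting `i` gives `e_{r+1} = e_{r+1}^ī + X_i e_r^ī`, and double counting gives
`Σ_i e_r^ī = (p - r) e_r`, hence `Σ_i X_i e_r^ī = (r + 1) e_{r+1}`. Applying the deletion
recurrence to both factors of `X_i e_α^ī e_{β+1}^ī` and summing over `i` moves one unit of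
degree from the second index to the first at the cost of `(α - β) e_{α+1} e_{β+1}`, so induction
on `β` gives the general bracket identity; the diagonal case is `α = β = n - 1`.
-/

open Finset

theorem Multiset.esymm_cons_succ {R : Type*} [CommSemiring R] (a : R) (s : Multiset R) (k : ℕ) :
    (a ::ₘ s).esymm (k + 1) = s.esymm (k + 1) + a * s.esymm k := by
  simp [Multiset.esymm, Multiset.powersetCard_cons, Multiset.sum_map_mul_left]

theorem Finset.sum_sum_powersetCard_erase {α β : Type*} [DecidableEq α] [AddCommMonoid β]
    (s : Finset α) (r : ℕ) (f : Finset α → β) :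
    ∑ i ∈ s, ∑ t ∈ (s.erase i).powersetCard r, f t
      = ∑ t ∈ s.powersetCard r, (#s - r) • f t := by
  have erase_eq :
      ∀ i ∈ s, (s.erase i).powersetCard r = (s.powersetCard r).filter (i ∉ ·) := by
    intro i _
    ext t
    simp only [mem_powersetCard, mem_filter, subset_erase]
    tauto
  rw [sum_congr rfl fun i hi => by rw [erase_eq i hi, sum_filter], sum_comm]
  refine sum_congr rfl fun t ht => ?_
  rw [mem_powersetCard] at ht
  rw [← sum_filter, sum_const, filter_not, filter_mem_eq_inter, inter_eq_right.2 ht.1,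
    card_sdiff_of_subset ht.1, ht.2]

section Esym

variable {p : ℕ} (X : Fin p → ℝ) (s : Finset (Fin p))

lemma esym_eq_esymm (k : ℕ) : esym X s k = (s.val.map X).esymm k :=
  (s.esymm_map_val X k).symm

@[simp] lemma esym_zero : esym X s 0 = 1 := by
  simp [esym]

lemma esym_succ_of_mem {i : Fin p} (hi : i ∈ s) (k : ℕ) :
    esym X s (k + 1) = esym X (s.erase i) (k + 1) + X i * esym X (s.erase i) k := by
  rw [esym_eq_esymm, esym_eq_esymm, esym_eq_esymm, erase_val, ← Multiset.esymm_cons_succ,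
    ← Multiset.map_cons, Multiset.cons_erase hi]

lemma sum_esym_erase (r : ℕ) :
    ∑ i ∈ s, esym X (s.erase i) r = ((#s : ℝ) - r) * esym X s r := by
  simp only [esym, sum_sum_powersetCard_erase, mul_sum]
  refine sum_congr rfl fun t ht => ?_
  rw [mem_powersetCard] at ht
  rw [nsmul_eq_mul, Nat.cast_sub (ht.2 ▸ card_le_card ht.1)]

lemma sum_mul_esym_erase (r : ℕ) :
    ∑ i ∈ s, X i * esym X (s.erase i) r = ((r : ℝ) + 1) * esym X s (r + 1) := by
  rw [sum_congr rfl fun i hi => eq_sub_of_add_eq' (esym_succ_of_mem X s hi r).symm,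
    sum_sub_distrib, sum_const, nsmul_eq_mul, sum_esym_erase]
  push_cast
  ring

noncomputable def bracket (α β : ℕ) : ℝ :=
  ∑ i ∈ s, X i * esym X (s.erase i) α * esym X (s.erase i) β

lemma bracket_zero_right (α : ℕ) : bracket X s α 0 = ((α : ℝ) + 1) * esym X s (α + 1) := by
  simp [bracket, sum_mul_esym_erase]

lemma bracket_succ_right (α β : ℕ) :
    bracket X s α (β + 1)
      = ((α : ℝ) - β) * esym X s (α + 1) * esym X s (β + 1) + bracket X s (α + 1) β := by
  have termwise : ∀ i ∈ s, X i * esym X (s.erase i) α * esym X (s.erase i) (β + 1)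
      = esym X s (α + 1) * esym X (s.erase i) (β + 1)
        - esym X (s.erase i) (α + 1) * esym X s (β + 1)
        + X i * esym X (s.erase i) (α + 1) * esym X (s.erase i) β := by
    intro i hi
    rw [esym_succ_of_mem X s hi α, esym_succ_of_mem X s hi β]
    ring
  rw [bracket, sum_congr rfl termwise, sum_add_distrib, sum_sub_distrib, ← mul_sum, ← sum_mul,
    sum_esym_erase, sum_esym_erase, bracket]
  push_cast
  ring

theorem bracket_eq_sum (α β : ℕ) :
    bracket X s α β = ∑ j ∈ range (β + 1),
      ((α : ℝ) - β + 2 * j + 1) * esym X s (α + 1 + j) * esym X s (β - j) := by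
  induction β generalizing α with
  | zero => simp [bracket_zero_right]
  | succ β ih =>
    rw [bracket_succ_right, ih, sum_range_succ' _ (β + 1)]
    simp only [Nat.add_sub_add_right]
    push_cast
    ring_nf

lemma esymZ_natCast (r : ℕ) : esymZ X r = esym X univ r := by
  simp [esymZ]

lemma esymZ_of_neg {r : ℤ} (hr : r < 0) : esymZ X r = 0 := by
  simp [esymZ, not_le.2 hr]

end Esym

theorem bracket_identity_diag_general {p : ℕ} (X : Fin p → ℝ) (n : ℕ)
    (h1 : 1 ≤ n) (h2 : n ≤ p) :
    ∑ i : Fin p, X i * (esym X (univ.erase i) (n - 1)) ^ 2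
      = ∑ k ∈ Finset.Icc 1 p,
          (2 * (k : ℝ) - 1) * esymZ X ((n : ℤ) - k) * esymZ X ((n : ℤ) + k - 1) := by
  obtain ⟨m, rfl⟩ : ∃ m, n = m + 1 := ⟨n - 1, by omega⟩
  have tail_vanishes : ∀ k ∈ Icc 1 p, k ∉ Icc 1 (m + 1) →
      (2 * (k : ℝ) - 1) * esymZ X ((↑(m + 1) : ℤ) - k)
        * esymZ X ((↑(m + 1) : ℤ) + k - 1) = 0 := by
    intro k hk hk'
    simp only [mem_Icc] at hk hk'
    rw [esymZ_of_neg X (by omega), mul_zero, zero_mul]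
  rw [← sum_subset (Icc_subset_Icc_right h2) tail_vanishes, ← Ico_add_one_right_eq_Icc,
    sum_Ico_eq_sum_range, Nat.add_sub_cancel, Nat.add_sub_cancel]
  have lhs : ∑ i, X i * esym X (univ.erase i) m ^ 2 = bracket X univ m m := by
    simp only [bracket, sq, mul_assoc]
  rw [lhs, bracket_eq_sum]
  refine sum_congr rfl fun j hj => ?_
  have hjm : j ≤ m := Nat.lt_succ_iff.1 (mem_range.1 hj)
  have lower : ((m + 1 : ℕ) : ℤ) - ((1 + j : ℕ) : ℤ) = ((m - j : ℕ) : ℤ) := by omega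
  have upper : ((m + 1 : ℕ) : ℤ) + ((1 + j : ℕ) : ℤ) - 1 = ((m + 1 + j : ℕ) : ℤ) := by omega
  rw [lower, upper, esymZ_natCast, esymZ_natCast]
  push_cast
  ring

theorem bracket_identity_diag {p : ℕ} (hp : 1 ≤ p) (X : Fin p → ℝ) (n : ℕ)
    (h1 : 1 ≤ n) (h2 : n ≤ p) :
    ∑ i : Fin p, X i * (esym X (univ.erase i) (n - 1)) ^ 2
      = ∑ k ∈ Finset.Icc 1 p,
          (2 * (k : ℝ) - 1) * esymZ X ((n : ℤ) - k) * esymZ X ((n : ℤ) + k - 1) :=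
  bracket_identity_diag_general X n h1 h2
end
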